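/- arXiv:1309.7579 — 2 statements merged into one kernel-verified Lean document; each statement's English description precedes it below -/
import Mathlib

section
/- Let p be prime, X₁,…,Xₙ, Y₁,…,Yₙ ⊆ F_p \ {0} nonempty, Z ⊆ F_p, and m ≥ 2. If |Z|² · Π_{i=1}^n |Xᵢ||Yᵢ| > p^(n+2), then every element u of F_p can be written as u = z₁ + ⋯ + z_m + Σ_{j=1}^n xⱼyⱼ with zᵢ ∈ Z, xⱼ ∈ Xⱼ, yⱼ ∈ Yⱼ. -/
open scoped Pointwise

open Finset Complex

noncomputable def ee (p : ℕ) [NeZero p] : AddChar (ZMod p) ℂ := ZMod.stdAddChar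

lemma ee_sum {p : ℕ} [Fact p.Prime] (a : ZMod p) :
    ∑ t : ZMod p, ee p (t * a) = if a = 0 then (p : ℂ) else 0 := by
  classical
  have := AddChar.sum_mulShift (ψ := ee p) a (ZMod.isPrimitive_stdAddChar p)
  simpa [ZMod.card] using this

lemma ee_conj {p : ℕ} [Fact p.Prime] (a : ZMod p) :
    (starRingEnd ℂ) (ee p a) = ee p (-a) := by
  have h1 : ‖ee p a‖ = 1 := AddChar.norm_apply _ _
  rw [AddChar.map_neg_eq_inv, Complex.inv_eq_conj h1]

lemma parseval {p : ℕ} [Fact p.Prime] (c : ZMod p) (hc : c ≠ 0) (W : Finset (ZMod p)) :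
    ∑ t : ZMod p, ‖∑ w ∈ W, ee p (t * (c * w))‖ ^ 2 = p * W.card := by
  classical
  have key : ∑ t : ZMod p, ((∑ w ∈ W, ee p (t * (c * w))) *
      (starRingEnd ℂ) (∑ w ∈ W, ee p (t * (c * w)))) = (p : ℂ) * W.card := by
    have hconj : ∀ t : ZMod p, (starRingEnd ℂ) (∑ w ∈ W, ee p (t * (c * w)))
        = ∑ w ∈ W, ee p (-(t * (c * w))) := by
      intro t; rw [map_sum]; simp [ee_conj]
    calc ∑ t : ZMod p, ((∑ w ∈ W, ee p (t * (c * w))) *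
          (starRingEnd ℂ) (∑ w ∈ W, ee p (t * (c * w))))
        = ∑ t : ZMod p, ∑ w ∈ W, ∑ w' ∈ W, ee p (t * (c * (w - w'))) := by
          refine Finset.sum_congr rfl fun t _ => ?_
          rw [hconj, Finset.sum_mul_sum]
          refine Finset.sum_congr rfl fun w _ => Finset.sum_congr rfl fun w' _ => ?_
          rw [← AddChar.map_add_eq_mul]
          ring_nf
      _ = ∑ w ∈ W, ∑ w' ∈ W, ∑ t : ZMod p, ee p (t * (c * (w - w'))) := by
          rw [Finset.sum_comm]
          exact Finset.sum_congr rfl fun w _ => Finset.sum_comm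
      _ = ∑ w ∈ W, ∑ w' ∈ W, if w = w' then (p : ℂ) else 0 := by
          refine Finset.sum_congr rfl fun w _ => Finset.sum_congr rfl fun w' _ => ?_
          rw [ee_sum]
          congr 1
          simp [mul_eq_zero, hc, sub_eq_zero, eq_iff_iff]
      _ = (p : ℂ) * W.card := by
          simp [Finset.sum_ite_eq, mul_comm]
  have : ((∑ t : ZMod p, ‖∑ w ∈ W, ee p (t * (c * w))‖ ^ 2 : ℝ) : ℂ) = (p : ℂ) * W.card := by
    push_cast
    rw [← key]
    refine Finset.sum_congr rfl fun t _ => ?_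
    rw [Complex.mul_conj']
  exact_mod_cast this

lemma bilinear {p : ℕ} [Fact p.Prime] {t : ZMod p} (ht : t ≠ 0) (X Y : Finset (ZMod p)) :
    ‖∑ x ∈ X, ∑ y ∈ Y, ee p (t * (x * y))‖ ≤ Real.sqrt (p * X.card * Y.card) := by
  classical
  set g : ZMod p → ℂ := fun x => ∑ y ∈ Y, ee p (x * (t * y)) with hg
  have hxy : ∀ x : ZMod p, (∑ y ∈ Y, ee p (t * (x * y))) = g x := by
    intro x; refine Finset.sum_congr rfl fun y _ => ?_; ring_nf
  have h1 : ‖∑ x ∈ X, ∑ y ∈ Y, ee p (t * (x * y))‖ ≤ ∑ x ∈ X, ‖g x‖ := by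
    simp_rw [hxy]; exact norm_sum_le _ _
  have h2 : (∑ x ∈ X, ‖g x‖) ^ 2 ≤ X.card * ∑ x ∈ X, ‖g x‖ ^ 2 :=
    sq_sum_le_card_mul_sum_sq
  have h3 : ∑ x ∈ X, ‖g x‖ ^ 2 ≤ ∑ x : ZMod p, ‖g x‖ ^ 2 :=
    Finset.sum_le_univ_sum_of_nonneg fun x => by positivity
  have h4 : ∑ x : ZMod p, ‖g x‖ ^ 2 = p * Y.card := parseval t ht Y
  have hnn : (0 : ℝ) ≤ ∑ x ∈ X, ‖g x‖ := Finset.sum_nonneg fun x _ => norm_nonneg _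
  have h5 : (∑ x ∈ X, ‖g x‖) ^ 2 ≤ p * X.card * Y.card := by
    calc (∑ x ∈ X, ‖g x‖) ^ 2 ≤ X.card * ∑ x ∈ X, ‖g x‖ ^ 2 := h2
      _ ≤ X.card * (p * Y.card) := by
          refine mul_le_mul_of_nonneg_left (h3.trans_eq h4) (by positivity)
      _ = p * X.card * Y.card := by ring
  have := (Real.le_sqrt hnn (by positivity)).2 h5
  exact h1.trans this

lemma ee_prod {p : ℕ} [NeZero p] {ι : Type*} (s : Finset ι) (f : ι → ZMod p) :
    ∏ i ∈ s, ee p (f i) = ee p (∑ i ∈ s, f i) := by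
  induction s using Finset.cons_induction with
  | empty => simp
  | cons a s ha ih => rw [Finset.prod_cons, Finset.sum_cons, ih, AddChar.map_add_eq_mul]

lemma expand {p : ℕ} [Fact p.Prime] {n m : ℕ} (X Y : Fin n → Finset (ZMod p))
    (Z : Finset (ZMod p)) (u : ZMod p) :
    ∑ xf ∈ Fintype.piFinset X, ∑ yf ∈ Fintype.piFinset Y,
      ∑ zf ∈ Fintype.piFinset (fun _ : Fin m => Z),
        (if (∑ i, zf i) + (∑ j, xf j * yf j) = u then (p : ℂ) else 0)
    = ∑ t : ZMod p, ee p (-(t * u)) * (∑ z ∈ Z, ee p (t * z)) ^ m *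
        ∏ j, ∑ x ∈ X j, ∑ y ∈ Y j, ee p (t * (x * y)) := by
  classical
  symm
  calc ∑ t : ZMod p, ee p (-(t * u)) * (∑ z ∈ Z, ee p (t * z)) ^ m *
        ∏ j, ∑ x ∈ X j, ∑ y ∈ Y j, ee p (t * (x * y))
      = ∑ t : ZMod p, ee p (-(t * u)) *
          (∑ zf ∈ Fintype.piFinset (fun _ : Fin m => Z), ∏ i, ee p (t * zf i)) *
          ∑ xf ∈ Fintype.piFinset X, ∑ yf ∈ Fintype.piFinset Y,
            ∏ j, ee p (t * (xf j * yf j)) := by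
        refine Finset.sum_congr rfl fun t _ => ?_
        congr 1
        · congr 1
          rw [← Finset.prod_univ_sum (fun _ => Z) (fun _ z => ee p (t * z)),
            Finset.prod_const, Finset.card_univ, Fintype.card_fin]
        · rw [Finset.prod_univ_sum X (fun j x => ∑ y ∈ Y j, ee p (t * (x * y)))]
          refine Finset.sum_congr rfl fun xf _ => ?_
          rw [Finset.prod_univ_sum Y (fun j y => ee p (t * (xf j * y)))]
    _ = ∑ t : ZMod p, ∑ xf ∈ Fintype.piFinset X, ∑ yf ∈ Fintype.piFinset Y,
          ∑ zf ∈ Fintype.piFinset (fun _ : Fin m => Z),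
            ee p (-(t * u)) * (∏ i, ee p (t * zf i)) * ∏ j, ee p (t * (xf j * yf j)) := by
        refine Finset.sum_congr rfl fun t _ => ?_
        simp only [Finset.mul_sum, Finset.sum_mul]
    _ = ∑ xf ∈ Fintype.piFinset X, ∑ yf ∈ Fintype.piFinset Y,
          ∑ zf ∈ Fintype.piFinset (fun _ : Fin m => Z), ∑ t : ZMod p,
            ee p (-(t * u)) * (∏ i, ee p (t * zf i)) * ∏ j, ee p (t * (xf j * yf j)) := by
        rw [Finset.sum_comm]
        refine Finset.sum_congr rfl fun xf _ => ?_
        rw [Finset.sum_comm]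
        exact Finset.sum_congr rfl fun yf _ => Finset.sum_comm
    _ = ∑ xf ∈ Fintype.piFinset X, ∑ yf ∈ Fintype.piFinset Y,
          ∑ zf ∈ Fintype.piFinset (fun _ : Fin m => Z),
            (if (∑ i, zf i) + (∑ j, xf j * yf j) = u then (p : ℂ) else 0) := by
        refine Finset.sum_congr rfl fun xf _ => Finset.sum_congr rfl fun yf _ =>
          Finset.sum_congr rfl fun zf _ => ?_
        have harg : ∀ t : ZMod p,
            ee p (-(t * u)) * (∏ i, ee p (t * zf i)) * ∏ j, ee p (t * (xf j * yf j))
            = ee p (t * (((∑ i, zf i) + ∑ j, xf j * yf j) - u)) := by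
          intro t
          rw [ee_prod, ee_prod, ← AddChar.map_add_eq_mul, ← AddChar.map_add_eq_mul]
          congr 1
          rw [← Finset.mul_sum, ← Finset.mul_sum]
          ring
        simp_rw [harg]
        rw [ee_sum]
        simp only [sub_eq_zero]

lemma prod_sqrt {ι : Type*} (s : Finset ι) (f : ι → ℝ) (hf : ∀ i ∈ s, 0 ≤ f i) :
    ∏ i ∈ s, Real.sqrt (f i) = Real.sqrt (∏ i ∈ s, f i) := by
  induction s using Finset.cons_induction with
  | empty => simp
  | cons a s ha ih =>
      rw [Finset.prod_cons, Finset.prod_cons, ih (fun i hi => hf i (Finset.mem_cons_of_mem hi)),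
        Real.sqrt_mul (hf a (Finset.mem_cons_self a s))]
theorem stmt6 (p : ℕ) [Fact p.Prime] (n m : ℕ) (hm : 2 ≤ m)
    (X Y : Fin n → Finset (ZMod p)) (Z : Finset (ZMod p))
    (hX : ∀ i, (X i).Nonempty) (hY : ∀ i, (Y i).Nonempty)
    (hX0 : ∀ i, (0 : ZMod p) ∉ X i) (hY0 : ∀ i, (0 : ZMod p) ∉ Y i)
    (hcard : p ^ (n + 2) < Z.card ^ 2 * ∏ i, (X i).card * (Y i).card) :
    ∀ u : ZMod p, ∃ (zf : Fin m → ZMod p) (xf yf : Fin n → ZMod p),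
      (∀ i, zf i ∈ Z) ∧ (∀ j, xf j ∈ X j) ∧ (∀ j, yf j ∈ Y j) ∧
      u = (∑ i, zf i) + ∑ j, xf j * yf j := by
  classical
  intro u
  obtain ⟨k, rfl⟩ : ∃ k, m = k + 2 := ⟨m - 2, by omega⟩
  -- notation
  set A : ℝ := (Z.card : ℝ) with hA
  set P : ℝ := ((∏ i, (X i).card * (Y i).card : ℕ) : ℝ) with hP
  have h0 : 0 < Z.card ^ 2 * ∏ i, (X i).card * (Y i).card := (Nat.zero_le _).trans_lt hcard
  have hZ0 : 0 < Z.card := by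
    rcases Nat.eq_zero_or_pos Z.card with h | h
    · rw [h] at h0; simp at h0
    · exact h
  have hP0 : 0 < ∏ i, (X i).card * (Y i).card := by
    rcases Nat.eq_zero_or_pos (∏ i, (X i).card * (Y i).card) with h | h
    · rw [h] at h0; simp at h0
    · exact h
  have hA1 : (1 : ℝ) ≤ A := by simp only [hA]; exact_mod_cast hZ0
  have hPpos : (0 : ℝ) < P := by simp only [hP]; exact_mod_cast hP0
  have hppos : (0 : ℝ) < p := by exact_mod_cast (Fact.out : p.Prime).pos
  -- key real inequality
  have hkey : (p : ℝ) * Real.sqrt ((p : ℝ) ^ n * P) < A * P := by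
    have e1 : Real.sqrt ((p : ℝ) ^ n * P) = Real.sqrt ((p : ℝ) ^ n) * Real.sqrt P :=
      Real.sqrt_mul (by positivity) _
    have e2 : Real.sqrt ((p : ℝ) ^ (n + 2) * P)
        = ((p : ℝ) * Real.sqrt ((p : ℝ) ^ n)) * Real.sqrt P := by
      rw [Real.sqrt_mul (by positivity : (0:ℝ) ≤ (p : ℝ) ^ (n + 2)),
        show ((p : ℝ) ^ (n + 2)) = (p : ℝ) ^ 2 * (p : ℝ) ^ n by ring,
        Real.sqrt_mul (by positivity), Real.sqrt_sq hppos.le]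
    have hsq : (p : ℝ) * Real.sqrt ((p : ℝ) ^ n * P) = Real.sqrt ((p : ℝ) ^ (n + 2) * P) := by
      rw [e1, e2]; ring
    rw [hsq]
    refine (Real.sqrt_lt' (by positivity)).2 ?_
    have hc : (p : ℝ) ^ (n + 2) < A ^ 2 * P := by simp only [hA, hP]; exact_mod_cast hcard
    calc (p : ℝ) ^ (n + 2) * P < (A ^ 2 * P) * P := by
          exact mul_lt_mul_of_pos_right hc hPpos
      _ = (A * P) ^ 2 := by ring
  set B : ℝ := Real.sqrt ((p : ℝ) ^ n * P) with hB
  set S : ZMod p → ℂ := fun t => ee p (-(t * u)) * (∑ z ∈ Z, ee p (t * z)) ^ (k + 2) *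
      ∏ j, ∑ x ∈ X j, ∑ y ∈ Y j, ee p (t * (x * y)) with hS
  have hApos : (0 : ℝ) < A := lt_of_lt_of_le zero_lt_one hA1
  have hBnn : (0 : ℝ) ≤ B := Real.sqrt_nonneg _
  -- Parseval over Z with c = 1
  have hpar : ∑ t : ZMod p, ‖∑ z ∈ Z, ee p (t * z)‖ ^ 2 = (p : ℝ) * Z.card := by
    have := parseval (p := p) 1 one_ne_zero Z
    simpa using this
  -- norm of S 0
  have hS0 : ‖S 0‖ = A ^ (k + 2) * P := by
    have h1 : S 0 = ((Z.card ^ (k + 2) * ∏ i, (X i).card * (Y i).card : ℕ) : ℂ) := by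
      simp only [hS, zero_mul, neg_zero, AddChar.map_zero_eq_one, one_mul,
        Finset.sum_const, nsmul_eq_mul, mul_one]
      push_cast
      ring
    rw [h1, Complex.norm_natCast]
    simp only [hA, hP]
    push_cast
    ring
  -- bound for t ≠ 0
  have hZA : ∀ t : ZMod p, ‖∑ z ∈ Z, ee p (t * z)‖ ≤ A := by
    intro t
    calc ‖∑ z ∈ Z, ee p (t * z)‖ ≤ ∑ z ∈ Z, ‖ee p (t * z)‖ := norm_sum_le _ _
      _ = A := by simp [hA]
  have hbound : ∀ t : ZMod p, t ≠ 0 →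
      ‖S t‖ ≤ A ^ k * B * ‖∑ z ∈ Z, ee p (t * z)‖ ^ 2 := by
    intro t ht
    have hprodB : ∏ j, ‖∑ x ∈ X j, ∑ y ∈ Y j, ee p (t * (x * y))‖ ≤ B := by
      calc ∏ j, ‖∑ x ∈ X j, ∑ y ∈ Y j, ee p (t * (x * y))‖
          ≤ ∏ j, Real.sqrt ((p : ℝ) * (X j).card * (Y j).card) :=
            Finset.prod_le_prod (fun j _ => norm_nonneg _) (fun j _ => bilinear ht _ _)
        _ = Real.sqrt (∏ j, ((p : ℝ) * (X j).card * (Y j).card)) :=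
            prod_sqrt _ _ (fun j _ => by positivity)
        _ = B := by
            rw [hB]
            congr 1
            have hone : ∀ j : Fin n, (p : ℝ) * (X j).card * (Y j).card
                = (p : ℝ) * ((X j).card * (Y j).card) := fun j => by ring
            simp_rw [hone]
            rw [Finset.prod_mul_distrib, Finset.prod_const, Finset.card_univ,
              Fintype.card_fin]
            simp only [hP]
            push_cast
            ring
    have hnormS : ‖S t‖ = ‖∑ z ∈ Z, ee p (t * z)‖ ^ (k + 2) *
        ∏ j, ‖∑ x ∈ X j, ∑ y ∈ Y j, ee p (t * (x * y))‖ := by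
      rw [hS]
      simp only [norm_mul, norm_pow, norm_prod, AddChar.norm_apply, one_mul]
    rw [hnormS, pow_add]
    calc ‖∑ z ∈ Z, ee p (t * z)‖ ^ k * ‖∑ z ∈ Z, ee p (t * z)‖ ^ 2 *
          ∏ j, ‖∑ x ∈ X j, ∑ y ∈ Y j, ee p (t * (x * y))‖
        ≤ A ^ k * ‖∑ z ∈ Z, ee p (t * z)‖ ^ 2 * B := by
          refine mul_le_mul ?_ hprodB (Finset.prod_nonneg fun j _ => norm_nonneg _)
            (by positivity)
          exact mul_le_mul_of_nonneg_right (pow_le_pow_left₀ (norm_nonneg _) (hZA t) k)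
            (by positivity)
      _ = A ^ k * B * ‖∑ z ∈ Z, ee p (t * z)‖ ^ 2 := by ring
  -- error bound
  have herr : ‖∑ t ∈ Finset.univ.erase (0 : ZMod p), S t‖ ≤ A ^ k * B * ((p : ℝ) * A) := by
    calc ‖∑ t ∈ Finset.univ.erase (0 : ZMod p), S t‖
        ≤ ∑ t ∈ Finset.univ.erase (0 : ZMod p), ‖S t‖ := norm_sum_le _ _
      _ ≤ ∑ t ∈ Finset.univ.erase (0 : ZMod p),
            A ^ k * B * ‖∑ z ∈ Z, ee p (t * z)‖ ^ 2 :=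
          Finset.sum_le_sum fun t ht => hbound t (Finset.ne_of_mem_erase ht)
      _ = A ^ k * B * ∑ t ∈ Finset.univ.erase (0 : ZMod p),
            ‖∑ z ∈ Z, ee p (t * z)‖ ^ 2 := by rw [Finset.mul_sum]
      _ ≤ A ^ k * B * ∑ t : ZMod p, ‖∑ z ∈ Z, ee p (t * z)‖ ^ 2 := by
          refine mul_le_mul_of_nonneg_left ?_ (by positivity)
          exact Finset.sum_le_sum_of_subset_of_nonneg (Finset.subset_univ _)
            (fun t _ _ => by positivity)
      _ = A ^ k * B * ((p : ℝ) * A) := by rw [hpar]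
  -- main term beats error
  have hlt : A ^ k * B * ((p : ℝ) * A) < A ^ (k + 2) * P := by
    calc A ^ k * B * ((p : ℝ) * A) = A ^ (k + 1) * ((p : ℝ) * B) := by ring
      _ < A ^ (k + 1) * (A * P) := by
          refine mul_lt_mul_of_pos_left ?_ (by positivity)
          exact hkey
      _ = A ^ (k + 2) * P := by ring
  -- the full sum is nonzero
  have hsum_ne : (∑ t : ZMod p, S t) ≠ 0 := by
    have hsplit : ∑ t : ZMod p, S t
        = S 0 + ∑ t ∈ Finset.univ.erase (0 : ZMod p), S t :=
      (Finset.add_sum_erase _ S (Finset.mem_univ 0)).symm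
    rw [hsplit]
    intro hzero
    have h6 : ‖S 0‖ ≤ ‖S 0 + ∑ t ∈ Finset.univ.erase (0 : ZMod p), S t‖
        + ‖∑ t ∈ Finset.univ.erase (0 : ZMod p), S t‖ := by
      have h7 := norm_add_le (S 0 + ∑ t ∈ Finset.univ.erase (0 : ZMod p), S t)
        (-(∑ t ∈ Finset.univ.erase (0 : ZMod p), S t))
      rw [add_neg_cancel_right, norm_neg] at h7
      exact h7
    rw [hzero, norm_zero, zero_add] at h6
    rw [hS0] at h6
    linarith
  -- transfer to the counting sum
  have hexp : (∑ xf ∈ Fintype.piFinset X, ∑ yf ∈ Fintype.piFinset Y,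
      ∑ zf ∈ Fintype.piFinset (fun _ : Fin (k + 2) => Z),
        (if (∑ i, zf i) + (∑ j, xf j * yf j) = u then (p : ℂ) else 0))
      = ∑ t : ZMod p, S t := by
    simp only [hS]
    exact expand X Y Z u
  have hT : (∑ xf ∈ Fintype.piFinset X, ∑ yf ∈ Fintype.piFinset Y,
      ∑ zf ∈ Fintype.piFinset (fun _ : Fin (k + 2) => Z),
        (if (∑ i, zf i) + (∑ j, xf j * yf j) = u then (p : ℂ) else 0)) ≠ 0 := by
    rw [hexp]; exact hsum_ne
  obtain ⟨xf, hxf, h1⟩ := Finset.exists_ne_zero_of_sum_ne_zero hT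
  obtain ⟨yf, hyf, h2⟩ := Finset.exists_ne_zero_of_sum_ne_zero h1
  obtain ⟨zf, hzf, h3⟩ := Finset.exists_ne_zero_of_sum_ne_zero h2
  have hcond : (∑ i, zf i) + (∑ j, xf j * yf j) = u := by
    by_contra hcond
    rw [if_neg hcond] at h3
    exact h3 rfl
  exact ⟨zf, xf, yf, fun i => Fintype.mem_piFinset.mp hzf i,
    fun j => Fintype.mem_piFinset.mp hxf j, fun j => Fintype.mem_piFinset.mp hyf j,
    hcond.symm⟩
end

section
/- Let B = [X, Y, Z] be a brick in the Heisenberg group H_n over F_p with |Z| > p/2. Then B·B = [X+X, Y+Y, F_p], and in particular B·B is a union of at least |B|/p cosets of the center [0, 0, F_p] of H_n. -/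
open scoped Pointwise

def Heis (p n : ℕ) : Type := (Fin n → ZMod p) × (Fin n → ZMod p) × ZMod p

namespace Heis

variable {p n : ℕ}

instance : Mul (Heis p n) :=
  ⟨fun a b => (a.1 + b.1, a.2.1 + b.2.1, (∑ i, a.1 i * b.2.1 i) + a.2.2 + b.2.2)⟩
instance : One (Heis p n) := ⟨((0 : Fin n → ZMod p), (0 : Fin n → ZMod p), (0 : ZMod p))⟩
instance : Inv (Heis p n) :=
  ⟨fun a => (-a.1, -a.2.1, (∑ i, a.1 i * a.2.1 i) - a.2.2)⟩

lemma one_def : (1 : Heis p n) = ((0 : Fin n → ZMod p), (0 : Fin n → ZMod p), (0 : ZMod p)) := rfl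

lemma inv_def (a : Heis p n) :
    a⁻¹ = (-a.1, -a.2.1, (∑ i, a.1 i * a.2.1 i) - a.2.2) := rfl

lemma mul_def (a b : Heis p n) :
    a * b = (a.1 + b.1, a.2.1 + b.2.1, (∑ i, a.1 i * b.2.1 i) + a.2.2 + b.2.2) := rfl

instance : Group (Heis p n) :=
  Group.ofLeftAxioms
    (fun a b c => by
      rw [mul_def (a * b), mul_def a b, mul_def a (b * c), mul_def b c]
      refine Prod.ext ?_ (Prod.ext ?_ ?_) <;>
        simp [mul_def, Finset.sum_add_distrib, add_mul, mul_add] <;> ring)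
    (fun a => by
      rw [mul_def]
      refine Prod.ext ?_ (Prod.ext ?_ ?_) <;>
        simp [mul_def, one_def])
    (fun a => by
      rw [mul_def]
      refine Prod.ext ?_ (Prod.ext ?_ ?_) <;>
        simp [mul_def, one_def, inv_def, Finset.sum_add_distrib, neg_mul, mul_comm] <;> ring)

instance [NeZero p] : Fintype (Heis p n) :=
  inferInstanceAs (Fintype ((Fin n → ZMod p) × (Fin n → ZMod p) × ZMod p))

instance : DecidableEq (Heis p n) :=
  inferInstanceAs (DecidableEq ((Fin n → ZMod p) × (Fin n → ZMod p) × ZMod p))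

end Heis

/-!
Write `g = [x, y, z]`. If `x ∈ X + X` and `y ∈ Y + Y`, split `x = x₁ + x₂` and `y = y₁ + y₂` with
`xᵢ ∈ X`, `yᵢ ∈ Y`; then `[x₁, y₁, z₁] · [x₂, y₂, z₂] = g` as soon as `z₁ + z₂ = z - ⟨x₁, y₂⟩`,
and such `z₁, z₂ ∈ Z` exist because `|Z| > p/2` forces `Z + Z = 𝔽_p` (pigeonhole on `Z` and
`t - Z`). Hence `B · B` is a union of cosets `[x, y, 𝔽_p]` of the centre, so it is `p` times the
number of these cosets in size, and `|B| ≤ |B · B|`.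
-/

open Finset

namespace Finset

variable {G : Type*} [Group G] [Fintype G] [DecidableEq G]

@[to_additive]
theorem mul_self_eq_univ_of_card_lt_card_add_card {s : Finset G}
    (hs : Fintype.card G < #s + #s) : s * s = univ := by
  refine eq_univ_of_forall fun g => ?_
  have hcard : #(g • s⁻¹) = #s := by rw [card_smul_finset, card_inv]
  obtain ⟨a, ha⟩ := inter_nonempty_of_card_lt_card_add_card (subset_univ s)
    (subset_univ (g • s⁻¹)) (by rwa [card_univ, hcard])
  obtain ⟨has, hag⟩ := mem_inter.mp ha
  obtain ⟨b, hb, rfl⟩ := mem_smul_finset.mp hag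
  exact mem_mul.mpr ⟨g • b, has, b⁻¹, mem_inv'.mp hb, by simp [smul_eq_mul, mul_assoc]⟩

end Finset

namespace Heis

variable {p n : ℕ}

def IsBrick (X Y : Fin n → Finset (ZMod p)) (Z : Finset (ZMod p)) (B : Finset (Heis p n)) :
    Prop :=
  ∀ g : Heis p n, g ∈ B ↔ (∀ i, g.1 i ∈ X i) ∧ (∀ i, g.2.1 i ∈ Y i) ∧ g.2.2 ∈ Z

theorem mem_mul_self_iff_of_isBrick [NeZero p] {X Y : Fin n → Finset (ZMod p)}
    {Z : Finset (ZMod p)} {B : Finset (Heis p n)} (hB : IsBrick X Y Z B) (hZ : Z + Z = univ)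
    (g : Heis p n) :
    g ∈ B * B ↔ (∀ i, g.1 i ∈ X i + X i) ∧ ∀ i, g.2.1 i ∈ Y i + Y i := by
  constructor
  · intro hg
    obtain ⟨a, ha, b, hb, rfl⟩ := mem_mul.mp hg
    rw [hB] at ha hb
    exact ⟨fun i => add_mem_add (ha.1 i) (hb.1 i), fun i => add_mem_add (ha.2.1 i) (hb.2.1 i)⟩
  · rintro ⟨hx, hy⟩
    choose x₁ hx₁ x₂ hx₂ hx using fun i => mem_add.mp (hx i)
    choose y₁ hy₁ y₂ hy₂ hy using fun i => mem_add.mp (hy i)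
    obtain ⟨z₁, hz₁, z₂, hz₂, hz⟩ := mem_add.mp (hZ ▸ mem_univ (g.2.2 - ∑ i, x₁ i * y₂ i))
    refine mem_mul.mpr ⟨(x₁, y₁, z₁), (hB _).mpr ⟨hx₁, hy₁, hz₁⟩,
      (x₂, y₂, z₂), (hB _).mpr ⟨hx₂, hy₂, hz₂⟩, ?_⟩
    refine (mul_def _ _).trans (Prod.ext (funext hx) (Prod.ext (funext hy) ?_))
    change (∑ i, x₁ i * y₂ i) + z₁ + z₂ = g.2.2
    rw [add_assoc, hz, add_sub_cancel]

/-- `hA` says that `A` is a union of cosets `[x, y, 𝔽_p]` of the centre. -/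
theorem card_eq_mul_ncard_of_forall_mem_iff [NeZero p] {A : Finset (Heis p n)}
    (hA : ∀ (g : Heis p n) (z : ZMod p), ((g.1, g.2.1, z) : Heis p n) ∈ A ↔ g ∈ A) :
    #A = p * Set.ncard {ab : (Fin n → ZMod p) × (Fin n → ZMod p) |
      ∀ z : ZMod p, ((ab.1, ab.2, z) : Heis p n) ∈ A} := by
  classical
  set S := {ab : (Fin n → ZMod p) × (Fin n → ZMod p) |
      ∀ z : ZMod p, ((ab.1, ab.2, z) : Heis p n) ∈ A}
  have hbij : #A = #(S.toFinset ×ˢ (univ : Finset (ZMod p))) := by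
    refine card_nbij' (fun g : Heis p n => ((g.1, g.2.1), g.2.2))
      (fun q => ((q.1.1, q.1.2, q.2) : Heis p n)) ?_ ?_ (fun _ _ => rfl) (fun _ _ => rfl)
    · intro g hg
      simpa [S, hA] using hg
    · rintro ⟨⟨x, y⟩, z⟩ hq
      simp only [coe_product, Set.coe_toFinset, coe_univ, Set.prod_univ, Set.mem_preimage,
        Set.mem_ofPred_eq, S] at hq
      exact hq z
  rw [hbij, card_product, card_univ, ZMod.card, Set.ncard_eq_toFinset_card', mul_comm]

end Heis

open Heis

theorem stmt12_general (p n : ℕ) [Fact p.Prime]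
    (X Y : Fin n → Finset (ZMod p)) (Z : Finset (ZMod p))
    (B : Finset (Heis p n))
    (hB : ∀ g : Heis p n, g ∈ B ↔
      ((∀ i, g.1 i ∈ X i) ∧ (∀ i, g.2.1 i ∈ Y i) ∧ g.2.2 ∈ Z))
    (hZbig : (p : ℝ) / 2 < Z.card) :
    (∀ g : Heis p n, g ∈ B * B ↔
      ((∀ i, g.1 i ∈ X i + X i) ∧ (∀ i, g.2.1 i ∈ Y i + Y i))) ∧
    (B.card : ℝ) / p ≤
      (Set.ncard {ab : (Fin n → ZMod p) × (Fin n → ZMod p) |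
        ∀ z : ZMod p, ((ab.1, ab.2, z) : Heis p n) ∈ B * B} : ℝ) := by
  have hZZ : Z + Z = univ := add_self_eq_univ_of_card_lt_card_add_card <| by
    rw [ZMod.card]
    have : (p : ℝ) < Z.card + Z.card := by linarith
    exact_mod_cast this
  have hmul := mem_mul_self_iff_of_isBrick hB hZZ
  refine ⟨hmul, ?_⟩
  have hcosets := card_eq_mul_ncard_of_forall_mem_iff (A := B * B) fun g z =>
    (hmul _).trans (hmul g).symm
  have hp : (0 : ℝ) < p := by exact_mod_cast (Fact.out : p.Prime).pos
  rw [div_le_iff₀ hp]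
  exact_mod_cast card_le_card_mul_self.trans_eq (hcosets.trans (mul_comm _ _))

theorem stmt12 (p n : ℕ) [Fact p.Prime]
    (X Y : Fin n → Finset (ZMod p)) (Z : Finset (ZMod p))
    (hX : ∀ i, (X i).Nonempty) (hY : ∀ i, (Y i).Nonempty) (hZ : Z.Nonempty)
    (hX0 : ∀ i, (0 : ZMod p) ∉ X i) (hY0 : ∀ i, (0 : ZMod p) ∉ Y i)
    (B : Finset (Heis p n))
    (hB : ∀ g : Heis p n, g ∈ B ↔
      ((∀ i, g.1 i ∈ X i) ∧ (∀ i, g.2.1 i ∈ Y i) ∧ g.2.2 ∈ Z))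
    (hZbig : (p : ℝ) / 2 < Z.card) :
    (∀ g : Heis p n, g ∈ B * B ↔
      ((∀ i, g.1 i ∈ X i + X i) ∧ (∀ i, g.2.1 i ∈ Y i + Y i))) ∧
    (B.card : ℝ) / p ≤
      (Set.ncard {ab : (Fin n → ZMod p) × (Fin n → ZMod p) |
        ∀ z : ZMod p, ((ab.1, ab.2, z) : Heis p n) ∈ B * B} : ℝ) :=
  stmt12_general p n X Y Z B hB hZbig
end
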